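/- arXiv:1706.04276 — 5 statements merged into one kernel-verified Lean document; each statement's English description precedes it below -/
import Mathlib

section
/- Let T be a closed convex set in R^n such that T - Π_T(θ*) := {θ - Π_T(θ*) : θ ∈ T} is a polyhedral cone. Then there exists r > 0 such that for all u with ‖u - θ*‖ ≤ r, one has ⟨Π_T(u) - Π_T(θ*), θ* - Π_T(θ*)⟩ = 0. -/
/-!
Write `T = p + {x | ⟪a j, x⟫ ≤ 0 ∀ j}` with `p = P θ*`. For a set `S` of constraints, the piece
`D_S` consists of the points `u` such that the constraints in `S` are active at `P u` and `u - P u`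
lies in the polar of `{d | ⟪a j, d⟫ ≤ 0 ∀ j ∈ S}`. Since `P` is 1-Lipschitz the finitely many pieces
are closed, and they cover the space: testing the variational inequality at `P u` along feasible
directions puts `u` into the piece of the active set of `P u`. Hence every `u` near `θ*` shares a
piece `D_S` with `θ*`; then `±(P u - p)` both satisfy the constraints in `S`, so both have
nonpositive inner product with `θ* - p`.
-/

open Set MeasureTheory Filter Metric
open scoped RealInnerProductSpace Topology

noncomputable section

abbrev E (n : ℕ) := EuclideanSpace ℝ (Fin n)

/-- `P` is the metric projection onto `C`. -/
def IsProjOn {n : ℕ} (C : Set (E n)) (P : E n → E n) : Prop :=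
  ∀ x, P x ∈ C ∧ ∀ y ∈ C, ‖x - P x‖ ≤ ‖x - y‖

/-- Tangent cone of `C` at `θ0`: closure of `{α • (θ - θ0) : α ≥ 0, θ ∈ C}`. -/
def tanCone {n : ℕ} (C : Set (E n)) (θ0 : E n) : Set (E n) :=
  closure {u : E n | ∃ α : ℝ, 0 ≤ α ∧ ∃ θ ∈ C, u = α • (θ - θ0)}

section Polyhedron

variable {F ι : Type*} [NormedAddCommGroup F] [InnerProductSpace ℝ F]

def polyhedron (a : ι → F) (p : F) : Set F := {θ | ∀ j, ⟪a j, θ - p⟫ ≤ 0}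

lemma convex_polyhedron (a : ι → F) (p : F) : Convex ℝ (polyhedron a p) := by
  simp only [polyhedron, ofPred_forall, inner_sub_right, sub_nonpos]
  exact convex_iInter fun j => convex_halfSpace_le (innerₗ F (a j)).isLinear _

lemma eventually_add_mul_nonpos {c e : ℝ} (hc : c ≤ 0) (he : c = 0 → e ≤ 0) :
    ∀ᶠ t in 𝓝[>] (0 : ℝ), c + t * e ≤ 0 := by
  rcases hc.lt_or_eq with hc | rfl
  · have hlim : Tendsto (fun t => c + t * e) (𝓝[>] 0) (𝓝 (c + 0 * e)) :=
      (Continuous.tendsto (by fun_prop) 0).mono_left nhdsWithin_le_nhds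
    rw [zero_mul, add_zero] at hlim
    exact (hlim.eventually_lt_const hc).mono fun t ht => ht.le
  · filter_upwards [self_mem_nhdsWithin] with t (ht : 0 < t)
    rw [zero_add]
    exact mul_nonpos_of_nonneg_of_nonpos ht.le (he rfl)

lemma eventually_add_smul_mem_polyhedron [Finite ι] {a : ι → F} {p x d : F}
    (hx : x ∈ polyhedron a p) (hd : ∀ j, ⟪a j, x - p⟫ = 0 → ⟪a j, d⟫ ≤ 0) :
    ∀ᶠ t in 𝓝[>] (0 : ℝ), x + t • d ∈ polyhedron a p := by
  refine eventually_all.2 fun j => ?_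
  simp only [add_sub_right_comm x, inner_add_right, inner_smul_right]
  exact eventually_add_mul_nonpos (hx j) (hd j)

end Polyhedron

namespace IsProjOn

variable {n : ℕ} {C : Set (E n)} {P : E n → E n}

lemma inner_sub_nonpos (hC : Convex ℝ C) (hP : IsProjOn C P) (u : E n) {z : E n}
    (hz : z ∈ C) : ⟪u - P u, z - P u⟫ ≤ 0 := by
  have : Nonempty C := ⟨⟨z, hz⟩⟩
  refine (norm_eq_iInf_iff_real_inner_le_zero hC (hP u).1).1 ?_ z hz
  exact le_antisymm (le_ciInf fun w => (hP u).2 w w.2)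
    (ciInf_le ⟨0, by rintro _ ⟨w, rfl⟩; exact norm_nonneg _⟩ (⟨P u, (hP u).1⟩ : C))

lemma lipschitzWith_one (hC : Convex ℝ C) (hP : IsProjOn C P) : LipschitzWith 1 P := by
  refine LipschitzWith.of_dist_le_mul fun u v => ?_
  rw [NNReal.coe_one, one_mul, dist_eq_norm, dist_eq_norm]
  have hu := hP.inner_sub_nonpos hC u (hP v).1
  have hv := hP.inner_sub_nonpos hC v (hP u).1
  have hfirm : ‖P u - P v‖ ^ 2 ≤ ⟪u - v, P u - P v⟫ := by
    rw [← neg_sub (P u) (P v), inner_neg_right, neg_nonpos] at hu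
    have : ⟪(u - P u) - (v - P v), P u - P v⟫ = ⟪u - v, P u - P v⟫ - ‖P u - P v‖ ^ 2 := by
      rw [sub_sub_sub_comm, inner_sub_left, real_inner_self_eq_norm_sq]
    rw [inner_sub_left] at this
    linarith
  have := hfirm.trans (real_inner_le_norm _ _)
  nlinarith [norm_nonneg (P u - P v), norm_nonneg (u - v)]

end IsProjOn

section Pieces

variable {n : ℕ} {ι : Type*}

def projectionPiece (P : E n → E n) (a : ι → E n) (p : E n) (S : Set ι) : Set (E n) :=
  {u | (∀ j ∈ S, ⟪a j, P u - p⟫ = 0) ∧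
    P u - u ∈ ProperCone.innerDual {d | ∀ j ∈ S, ⟪a j, d⟫ ≤ 0}}

variable {P : E n → E n} {a : ι → E n} {p : E n}

lemma isClosed_projectionPiece (hP : Continuous P) (S : Set ι) :
    IsClosed (projectionPiece P a p S) := by
  unfold projectionPiece
  rw [ofPred_and]
  refine IsClosed.inter ?_ ((ProperCone.innerDual _).isClosed.preimage (hP.sub continuous_id))
  simp only [ofPred_forall]
  exact isClosed_iInter fun j => isClosed_iInter fun _ => isClosed_eq (by fun_prop) continuous_const

lemma mem_projectionPiece_activeSet [Finite ι] (hP : IsProjOn (polyhedron a p) P) (u : E n) :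
    u ∈ projectionPiece P a p {j | ⟪a j, P u - p⟫ = 0} := by
  refine ⟨fun j hj => hj, ProperCone.mem_innerDual.2 fun d hd => ?_⟩
  obtain ⟨t, htT, ht⟩ :=
    ((eventually_add_smul_mem_polyhedron (hP u).1 hd).and self_mem_nhdsWithin).exists
  have hvi := hP.inner_sub_nonpos (convex_polyhedron a p) u htT
  rw [add_sub_cancel_left, inner_smul_right] at hvi
  have : ⟪d, P u - u⟫ = -⟪u - P u, d⟫ := by rw [real_inner_comm, ← inner_neg_left, neg_sub]
  rw [this, neg_nonneg]
  exact nonpos_of_mul_nonpos_right hvi ht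

lemma inner_sub_eq_zero_of_mem_projectionPiece {S : Set ι} {θ u : E n}
    (hθ : θ ∈ projectionPiece P a p S) (hu : u ∈ projectionPiece P a p S) :
    ⟪P u - P θ, θ - P θ⟫ = 0 := by
  have hface : ∀ j ∈ S, ⟪a j, P u - P θ⟫ = 0 := fun j hj => by
    rw [← sub_sub_sub_cancel_right _ _ p, inner_sub_right, hu.1 j hj, hθ.1 j hj, sub_zero]
  have h₁ := ProperCone.mem_innerDual.1 hθ.2 (x := P u - P θ) fun j hj => (hface j hj).le
  have h₂ := ProperCone.mem_innerDual.1 hθ.2 (x := -(P u - P θ)) fun j hj => by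
    rw [inner_neg_right, hface j hj, neg_zero]
  rw [inner_neg_left] at h₂
  rw [← neg_sub (P θ) θ, inner_neg_right]
  linarith

end Pieces

lemma eventually_forall_mem_imp_mem {X κ : Type*} [TopologicalSpace X] [Finite κ]
    {D : κ → Set X} (hD : ∀ i, IsClosed (D i)) (x : X) :
    ∀ᶠ y in 𝓝 x, ∀ i, y ∈ D i → x ∈ D i := by
  refine eventually_all.2 fun i => ?_
  by_cases hx : x ∈ D i
  · exact .of_forall fun _ _ => hx
  · filter_upwards [(hD i).isOpen_compl.mem_nhds hx] with y hy hyD using absurd hyD hy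

theorem stmt8_general {n : ℕ} (T : Set (E n)) (P : E n → E n) (hP : IsProjOn T P) (θs : E n)
    (hpoly : ∃ (m : ℕ) (a : Fin m → E n),
      ((fun θ => θ - P θs) '' T) = {x : E n | ∀ j, ⟪a j, x⟫ ≤ 0}) :
    ∃ r > (0 : ℝ), ∀ u : E n, ‖u - θs‖ ≤ r → ⟪P u - P θs, θs - P θs⟫ = 0 := by
  obtain ⟨m, a, hpoly⟩ := hpoly
  obtain rfl : T = polyhedron a (P θs) := by
    ext θ; rw [← sub_left_injective.mem_set_image, hpoly]; rfl
  have hPc : Continuous P := (hP.lipschitzWith_one (convex_polyhedron a _)).continuous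
  obtain ⟨r, hr, hnear⟩ := nhds_basis_closedBall.eventually_iff.1 <|
    eventually_forall_mem_imp_mem (isClosed_projectionPiece (a := a) (p := P θs) hPc) θs
  refine ⟨r, hr, fun u hu => ?_⟩
  have hu' := mem_projectionPiece_activeSet hP u
  exact inner_sub_eq_zero_of_mem_projectionPiece
    (hnear (by rwa [mem_closedBall, dist_eq_norm]) _ hu') hu'

theorem stmt8 {n : ℕ} (T : Set (E n)) (hne : T.Nonempty) (hcl : IsClosed T)
    (hconv : Convex ℝ T) (P : E n → E n) (hP : IsProjOn T P) (θs : E n)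
    (hpoly : ∃ (m : ℕ) (a : Fin m → E n),
      ((fun θ => θ - P θs) '' T) = {x : E n | ∀ j, ⟪a j, x⟫ ≤ 0}) :
    ∃ r > (0 : ℝ), ∀ u : E n, ‖u - θs‖ ≤ r → ⟪P u - P θs, θs - P θs⟫ = 0 :=
  stmt8_general T P hP θs hpoly
end
end

section
/- Suppose C ⊆ R^n is a polyhedral closed convex set (so that C coincides with the translate of the tangent cone T_C(Π_C(θ*)) in a neighborhood of Π_C(θ*)), θ* ∈ R^n, Z is a zero-mean random vector with E‖Z‖² < ∞, and Y = θ* + σZ. Then lim_{σ→0+} σ^{-2} E‖Π_C(Y) - Π_C(θ*)‖² = E‖Π_K(Z)‖², where K = T_C(Π_C(θ*)) ∩ (θ* - Π_C(θ*))^⊥. -/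
/-!
Near `x₀ = Π_C θ` the polyhedron `C` coincides with `x₀ + T`, where `T` is the cone cut out by the
constraints active at `x₀`, and `v = θ - x₀` lies in the polar of `T`. Finitely generated cones are
closed (conic Carathéodory), so Farkas' lemma applies and puts `z - Π_K z` in `T° + ℝ v`. With this
one checks the variational inequality showing `Π_C (θ + σ z) = x₀ + σ Π_K z` for all small `σ > 0`,
so `σ⁻² ‖Π_C (θ + σ z) - Π_C θ‖²` is eventually `‖Π_K z‖²`. Since `Π_C` is `1`-Lipschitz that
quantity is bounded by `‖z‖²`, and dominated convergence concludes.
-/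

open Set MeasureTheory Filter Metric
open scoped RealInnerProductSpace Topology

noncomputable section

namespace PointedCone

variable {V : Type*} [AddCommGroup V] [Module ℝ V]

theorem coe_hull_finset_eq_image (s : Finset V) :
    (hull ℝ (s : Set V) : Set V) = Fintype.linearCombination ℝ ((↑) : s → V) '' {c | 0 ≤ c} := by
  ext x
  simp only [SetLike.mem_coe, Submodule.mem_span_finset', mem_image, mem_ofPred_eq,
    Fintype.linearCombination_apply]
  constructor
  · rintro ⟨c, rfl⟩
    exact ⟨fun i => c i, fun i => (c i).2, rfl⟩
  · rintro ⟨c, hc, rfl⟩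
    exact ⟨fun i => ⟨c i, hc i⟩, rfl⟩

theorem exists_mem_hull_erase_of_not_linearIndependent [DecidableEq V] {s : Finset V}
    (hs : ¬LinearIndependent ℝ ((↑) : s → V)) {x : V} (hx : x ∈ hull ℝ (s : Set V)) :
    ∃ i ∈ s, x ∈ hull ℝ (s.erase i : Set V) := by
  rw [← SetLike.mem_coe, coe_hull_finset_eq_image] at hx
  obtain ⟨c, hc : ∀ j, 0 ≤ c j, rfl⟩ := hx
  obtain ⟨g, hg, j₀, hj₀⟩ : ∃ g : s → ℝ, ∑ j, g j • (j : V) = 0 ∧ ∃ j, 0 < g j := by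
    obtain ⟨g, hg, j, hj⟩ := Fintype.not_linearIndependent_iff.mp hs
    rcases hj.lt_or_gt with hj | hj
    · refine ⟨-g, ?_, j, neg_pos.2 hj⟩
      simp only [Pi.neg_apply, neg_smul, Finset.sum_neg_distrib, hg, neg_zero]
    · exact ⟨g, hg, j, hj⟩
  -- the largest `t` keeping `c - t • g` nonnegative kills the coefficient at a minimiser `i`
  obtain ⟨i, hi, hmin⟩ := Finset.exists_min_image {j | 0 < g j} (fun j => c j / g j)
    ⟨j₀, (Finset.mem_filter_univ _).2 hj₀⟩
  rw [Finset.mem_filter_univ] at hi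
  set t := c i / g i
  have ht : 0 ≤ t := div_nonneg (hc i) hi.le
  have hcoef : ∀ j, 0 ≤ c j - t * g j := by
    intro j
    rcases lt_or_ge 0 (g j) with hj | hj
    · have := hmin j (by simpa using hj)
      rw [le_div_iff₀ hj] at this
      linarith
    · nlinarith [hc j, mul_nonpos_of_nonneg_of_nonpos ht hj]
  have hsame : Fintype.linearCombination ℝ ((↑) : s → V) c
      = Fintype.linearCombination ℝ ((↑) : s → V) (c - t • g) := by
    rw [map_sub, map_smul, Fintype.linearCombination_apply ℝ _ g, hg, smul_zero, sub_zero]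
  refine ⟨i, i.2, ?_⟩
  rw [hsame, Fintype.linearCombination_apply]
  refine Submodule.sum_mem _ fun j _ => ?_
  by_cases hji : j = i
  · subst hji
    simp [t, hi.ne']
  · exact smul_mem _ (hcoef j)
      (subset_hull (Finset.mem_erase.2 ⟨Subtype.coe_injective.ne hji, j.2⟩))

variable [TopologicalSpace V] [IsTopologicalAddGroup V] [ContinuousSMul ℝ V] [T2Space V]

theorem isClosed_hull_finset (s : Finset V) : IsClosed (hull ℝ (s : Set V) : Set V) := by
  classical
  induction s using Finset.strongInduction with
  | H s ih =>
  by_cases hs : LinearIndependent ℝ ((↑) : s → V)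
  · rw [coe_hull_finset_eq_image]
    have hinj : LinearMap.ker (Fintype.linearCombination ℝ ((↑) : s → V)) = ⊥ :=
      LinearMap.ker_eq_bot.2 hs.fintypeLinearCombination_injective
    exact (LinearMap.isClosedEmbedding_of_injective hinj).isClosedMap _ isClosed_Ici
  · have hunion : (hull ℝ (s : Set V) : Set V) = ⋃ i ∈ s, (hull ℝ (s.erase i : Set V) : Set V) :=
      subset_antisymm (fun x hx => by
          obtain ⟨i, hi, hxi⟩ := exists_mem_hull_erase_of_not_linearIndependent hs hx
          exact mem_iUnion₂.2 ⟨i, hi, hxi⟩)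
        (iUnion₂_subset fun i _ => Submodule.span_mono (Finset.coe_subset.2 (s.erase_subset i)))
    rw [hunion]
    exact s.finite_toSet.isClosed_biUnion fun i hi => ih _ (Finset.erase_ssubset hi)

theorem isClosed_hull {s : Set V} (hs : s.Finite) : IsClosed (hull ℝ s : Set V) := by
  lift s to Finset V using hs
  exact isClosed_hull_finset s

end PointedCone

section PolyhedralCones

variable {V : Type*} [NormedAddCommGroup V] [InnerProductSpace ℝ V]

theorem PointedCone.mem_hull_of_forall_inner_nonneg [CompleteSpace V] {s : Set V} (hs : s.Finite)
    {x : V} (h : ∀ w, (∀ y ∈ s, 0 ≤ ⟪y, w⟫) → 0 ≤ ⟪x, w⟫) : x ∈ hull ℝ s := by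
  by_contra hx
  obtain ⟨w, hw, hxw⟩ :=
    ProperCone.hyperplane_separation' (⟨hull ℝ s, isClosed_hull hs⟩ : ProperCone ℝ V) hx
  exact (h w fun y hy => hw y (subset_hull hy)).not_gt hxw

-- Farkas: the polar of `{w | ∀ i, ⟪a i, w⟫ ≤ 0} ∩ v^⊥` is the cone spanned by the `a i` plus `ℝ v`.
theorem exists_forall_inner_le_mul_inner [CompleteSpace V] {ι : Type*} [Finite ι] (a : ι → V)
    {v c : V} (h : ∀ w, (∀ i, ⟪a i, w⟫ ≤ 0) → ⟪v, w⟫ = 0 → ⟪c, w⟫ ≤ 0) :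
    ∃ t : ℝ, ∀ w, (∀ i, ⟪a i, w⟫ ≤ 0) → ⟪c, w⟫ ≤ t * ⟪v, w⟫ := by
  have hc : c ∈ PointedCone.hull ℝ (range a ∪ {v, -v}) := by
    refine PointedCone.mem_hull_of_forall_inner_nonneg ((finite_range a).union (by simp))
      fun w hw => ?_
    have hv : ⟪v, -w⟫ = 0 := by
      have h₁ := hw v (by simp)
      have h₂ := hw (-v) (by simp)
      rw [inner_neg_left] at h₂
      rw [inner_neg_right]
      linarith
    have := h (-w) (fun i => by simpa [inner_neg_right] using hw (a i) (.inl (mem_range_self i))) hv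
    simpa [inner_neg_right] using this
  rw [PointedCone.hull, Submodule.span_union, Submodule.mem_sup] at hc
  obtain ⟨p, hp, q, hq, rfl⟩ := hc
  obtain ⟨r₁, r₂, rfl⟩ := Submodule.mem_span_pair.1 hq
  refine ⟨r₁ - r₂, fun w hw => ?_⟩
  have hpw : ⟪p, w⟫ ≤ 0 := by
    clear h hq
    induction hp using Submodule.span_induction with
    | mem y hy => obtain ⟨i, rfl⟩ := hy; exact hw i
    | zero => simp
    | add x y _ _ hx hy => rw [inner_add_left]; linarith
    | smul r x _ hx =>
      rw [← Nonneg.coe_smul, real_inner_smul_left]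
      exact mul_nonpos_of_nonneg_of_nonpos r.2 hx
  simp only [inner_add_left, ← Nonneg.coe_smul, real_inner_smul_left, inner_neg_left]
  linarith

variable {ι : Type*}

def activeCone (a : ι → V) (b : ι → ℝ) (x : V) : Set V :=
  {w | ∀ j, ⟪a j, x⟫ = b j → ⟪a j, w⟫ ≤ 0}

variable {a : ι → V} {b : ι → ℝ} {x : V}

theorem convex_polyhedron_s10 (a : ι → V) (b : ι → ℝ) : Convex ℝ {u : V | ∀ j, ⟪a j, u⟫ ≤ b j} := by
  simp only [ofPred_forall]
  exact convex_iInter fun j => convex_halfSpace_le (innerₛₗ ℝ (a j)).isLinear (b j)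

theorem isClosed_activeCone : IsClosed (activeCone a b x) := by
  simp only [activeCone, ofPred_forall]
  exact isClosed_iInter fun j => isClosed_iInter fun _ =>
    isClosed_le (continuous_const.inner continuous_id) continuous_const

theorem convex_activeCone : Convex ℝ (activeCone a b x) := by
  simp only [activeCone, ofPred_forall]
  exact convex_iInter fun j => convex_iInter fun _ =>
    convex_halfSpace_le (innerₛₗ ℝ (a j)).isLinear 0

theorem smul_mem_activeCone {w : V} (hw : w ∈ activeCone a b x) {r : ℝ} (hr : 0 ≤ r) :
    r • w ∈ activeCone a b x := fun j hj => by
  rw [real_inner_smul_right]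
  exact mul_nonpos_of_nonneg_of_nonpos hr (hw j hj)

theorem sub_mem_activeCone {y : V} (hy : ∀ j, ⟪a j, y⟫ ≤ b j) : y - x ∈ activeCone a b x :=
  fun j hj => by rw [inner_sub_right, hj]; linarith [hy j]

theorem eventually_add_smul_mem_polyhedron_s10 [Finite ι] (hx : ∀ j, ⟪a j, x⟫ ≤ b j) {w : V}
    (hw : w ∈ activeCone a b x) : ∀ᶠ δ in 𝓝[>] (0 : ℝ), ∀ j, ⟪a j, x + δ • w⟫ ≤ b j := by
  refine eventually_all.2 fun j => ?_
  by_cases hj : ⟪a j, x⟫ = b j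
  · filter_upwards [self_mem_nhdsWithin] with δ (hδ : 0 < δ)
    rw [inner_add_right, real_inner_smul_right, hj]
    nlinarith [hw j hj]
  · have hcont : Tendsto (fun δ : ℝ => ⟪a j, x + δ • w⟫) (𝓝[>] 0) (𝓝 ⟪a j, x⟫) := by
      have : Continuous fun δ : ℝ => ⟪a j, x + δ • w⟫ := by fun_prop
      simpa using this.continuousWithinAt.tendsto (s := Ioi 0) (x := 0)
    exact hcont.eventually (eventually_le_nhds ((hx j).lt_of_ne hj))

end PolyhedralCones

section MetricProjection

variable {n : ℕ}

theorem tanCone_polyhedron {ι : Type*} [Finite ι] {a : ι → E n} {b : ι → ℝ} {x : E n}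
    (hx : ∀ j, ⟪a j, x⟫ ≤ b j) : tanCone {u | ∀ j, ⟪a j, u⟫ ≤ b j} x = activeCone a b x := by
  refine subset_antisymm (closure_minimal ?_ isClosed_activeCone) fun w hw => ?_
  · rintro _ ⟨α, hα, θ, hθ, rfl⟩ j hj
    rw [real_inner_smul_right]
    exact mul_nonpos_of_nonneg_of_nonpos hα (sub_mem_activeCone hθ j hj)
  · obtain ⟨δ, hmem, hδ : 0 < δ⟩ :=
      ((eventually_add_smul_mem_polyhedron_s10 hx hw).and self_mem_nhdsWithin).exists
    refine subset_closure ⟨δ⁻¹, inv_nonneg.2 hδ.le, x + δ • w, hmem, ?_⟩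
    rw [add_sub_cancel_left, smul_smul, inv_mul_cancel₀ hδ.ne', one_smul]

namespace IsProjOn

variable {C : Set (E n)} {P : E n → E n}

theorem inner_sub_le_zero (hC : Convex ℝ C) (hP : IsProjOn C P) (x : E n) {y : E n}
    (hy : y ∈ C) : ⟪x - P x, y - P x⟫ ≤ 0 := by
  have : Nonempty C := ⟨⟨P x, (hP x).1⟩⟩
  refine (norm_eq_iInf_iff_real_inner_le_zero hC (hP x).1).1 (le_antisymm ?_ ?_) y hy
  · exact le_ciInf fun w => (hP x).2 w w.2
  · have hbdd : BddBelow (range fun w : C => ‖x - w‖) :=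
      ⟨0, forall_mem_range.2 fun w => norm_nonneg _⟩
    exact ciInf_le hbdd ⟨P x, (hP x).1⟩

theorem eq_of_inner_sub_le_zero (hP : IsProjOn C P) {x p : E n} (hp : p ∈ C)
    (h : ∀ y ∈ C, ⟪x - p, y - p⟫ ≤ 0) : P x = p := by
  have hsplit : ‖x - P x‖ ^ 2 = ‖x - p‖ ^ 2 - 2 * ⟪x - p, P x - p⟫ + ‖P x - p‖ ^ 2 := by
    rw [← norm_sub_sq_real]; congr 2; abel
  have hmin : ‖x - P x‖ ^ 2 ≤ ‖x - p‖ ^ 2 := by gcongr; exact (hP x).2 p hp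
  have : ‖P x - p‖ ^ 2 ≤ 0 := by linarith [h (P x) (hP x).1]
  rw [← sub_eq_zero, ← norm_eq_zero]
  exact pow_eq_zero_iff two_ne_zero |>.1 (le_antisymm this (by positivity))

theorem norm_sub_le (hC : Convex ℝ C) (hP : IsProjOn C P) (x y : E n) :
    ‖P x - P y‖ ≤ ‖x - y‖ := by
  have hx := hP.inner_sub_le_zero hC x (hP y).1
  have hy := hP.inner_sub_le_zero hC y (hP x).1
  have key : ‖P x - P y‖ ^ 2 ≤ ⟪x - y, P x - P y⟫ := by
    have : ⟪x - y, P x - P y⟫ - ‖P x - P y‖ ^ 2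
        = -⟪x - P x, P y - P x⟫ - ⟪y - P y, P x - P y⟫ := by
      rw [← real_inner_self_eq_norm_sq]
      simp only [inner_sub_left, inner_sub_right, real_inner_comm]
      ring
    linarith
  have := key.trans (real_inner_le_norm _ _)
  nlinarith [norm_nonneg (P x - P y), norm_nonneg (x - y)]

theorem continuous (hC : Convex ℝ C) (hP : IsProjOn C P) : Continuous P :=
  (LipschitzWith.of_dist_le' (K := 1) fun x y => by
    simpa [dist_eq_norm] using hP.norm_sub_le hC x y).continuous

theorem inner_sub_self_eq_zero_of_cone (hC : Convex ℝ C)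
    (hcone : ∀ k ∈ C, ∀ r : ℝ, 0 ≤ r → r • k ∈ C) (hP : IsProjOn C P) (z : E n) :
    ⟪z - P z, P z⟫ = 0 := by
  have h₀ := hP.inner_sub_le_zero hC z (hcone _ (hP z).1 0 le_rfl)
  have h₂ := hP.inner_sub_le_zero hC z (hcone _ (hP z).1 2 zero_le_two)
  rw [zero_smul, zero_sub, inner_neg_right] at h₀
  rw [two_smul, add_sub_cancel_right] at h₂
  linarith

theorem inner_sub_le_zero_of_cone (hC : Convex ℝ C)
    (hcone : ∀ k ∈ C, ∀ r : ℝ, 0 ≤ r → r • k ∈ C) (hP : IsProjOn C P) (z : E n) {k : E n}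
    (hk : k ∈ C) : ⟪z - P z, k⟫ ≤ 0 := by
  have := hP.inner_sub_le_zero hC z hk
  rwa [inner_sub_right, hP.inner_sub_self_eq_zero_of_cone hC hcone z, sub_zero] at this

theorem sq_norm_sub_div_sq_le (hC : Convex ℝ C) (hP : IsProjOn C P) (θ z : E n) (σ : ℝ) :
    1 / σ ^ 2 * ‖P (θ + σ • z) - P θ‖ ^ 2 ≤ ‖z‖ ^ 2 := by
  rcases eq_or_ne σ 0 with rfl | hσ
  · simp
  rw [one_div, inv_mul_le_iff₀ (by positivity)]
  calc ‖P (θ + σ • z) - P θ‖ ^ 2 ≤ ‖σ • z‖ ^ 2 := by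
        gcongr
        simpa using hP.norm_sub_le hC (θ + σ • z) θ
    _ = σ ^ 2 * ‖z‖ ^ 2 := by rw [norm_smul, mul_pow, Real.norm_eq_abs, sq_abs]

end IsProjOn

variable {ι : Type*} [Finite ι] {a : ι → E n} {b : ι → ℝ} {P : E n → E n}

theorem inner_sub_proj_le_zero_of_mem_activeCone (hP : IsProjOn {u | ∀ j, ⟪a j, u⟫ ≤ b j} P)
    (θ : E n) {w : E n} (hw : w ∈ activeCone a b (P θ)) : ⟪θ - P θ, w⟫ ≤ 0 := by
  obtain ⟨δ, hmem, hδ : 0 < δ⟩ :=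
    ((eventually_add_smul_mem_polyhedron_s10 (hP θ).1 hw).and self_mem_nhdsWithin).exists
  have := hP.inner_sub_le_zero (convex_polyhedron_s10 a b) θ hmem
  rw [add_sub_cancel_left, real_inner_smul_right] at this
  exact nonpos_of_mul_nonpos_right this hδ

theorem eventually_proj_add_smul_eq (hP : IsProjOn {u | ∀ j, ⟪a j, u⟫ ≤ b j} P) (θ : E n)
    {K : Set (E n)} (hK : K = activeCone a b (P θ) ∩ {u | ⟪u, θ - P θ⟫ = 0})
    {PK : E n → E n} (hPK : IsProjOn K PK) (z : E n) :
    ∀ᶠ σ in 𝓝[>] (0 : ℝ), P (θ + σ • z) = P θ + σ • PK z := by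
  set x₀ := P θ
  set v := θ - x₀
  set u := PK z
  have hKconv : Convex ℝ K := by
    have : Convex ℝ {u : E n | ⟪u, v⟫ = 0} := by
      simpa only [innerₛₗ_apply_apply, real_inner_comm v] using
        convex_hyperplane (innerₛₗ ℝ v).isLinear 0
    exact hK ▸ convex_activeCone.inter this
  have hKcone : ∀ k ∈ K, ∀ r : ℝ, 0 ≤ r → r • k ∈ K := by
    rw [hK]
    rintro k ⟨hkT, hkv : ⟪k, v⟫ = 0⟩ r hr
    exact ⟨smul_mem_activeCone hkT hr, by simp [real_inner_smul_left, hkv]⟩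
  have hu := (hPK z).1
  rw [hK] at hu
  obtain ⟨huT, huv : ⟪u, v⟫ = 0⟩ := hu
  have hzu : ⟪z - u, u⟫ = 0 := hPK.inner_sub_self_eq_zero_of_cone hKconv hKcone z
  obtain ⟨t, ht⟩ := exists_forall_inner_le_mul_inner (fun j : {j // ⟪a j, x₀⟫ = b j} => a j)
    (v := v) (c := z - u) fun w hw hvw => hPK.inner_sub_le_zero_of_cone hKconv hKcone z
      (hK ▸ ⟨fun j hj => hw ⟨j, hj⟩, by rwa [mem_ofPred_eq, real_inner_comm]⟩)
  have hσt : ∀ᶠ σ in 𝓝[>] (0 : ℝ), 0 < 1 + σ * t :=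
    nhdsWithin_le_nhds <| ContinuousAt.eventually_lt continuousAt_const (by fun_prop) (by simp)
  filter_upwards [eventually_add_smul_mem_polyhedron_s10 (hP θ).1 huT, hσt, self_mem_nhdsWithin]
    with σ hmem hσt (hσ : 0 < σ)
  refine hP.eq_of_inner_sub_le_zero hmem fun y hy => ?_
  have hw := sub_mem_activeCone (x := x₀) hy
  calc ⟪θ + σ • z - (x₀ + σ • u), y - (x₀ + σ • u)⟫
      = ⟪v, y - x₀⟫ + σ * ⟪z - u, y - x₀⟫ := by
        have : θ + σ • z - (x₀ + σ • u) = v + σ • (z - u) := by module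
        rw [this, sub_add_eq_sub_sub]
        simp only [inner_add_left, inner_sub_right, real_inner_smul_left, real_inner_smul_right,
          real_inner_comm u v, huv, hzu]
        ring
    _ ≤ ⟪v, y - x₀⟫ + σ * (t * ⟪v, y - x₀⟫) := by
        gcongr
        exact ht _ fun j => hw j j.2
    _ = (1 + σ * t) * ⟪v, y - x₀⟫ := by ring
    _ ≤ 0 := mul_nonpos_of_nonneg_of_nonpos hσt.le
        (inner_sub_proj_le_zero_of_mem_activeCone hP θ hw)

theorem tendsto_sq_norm_proj_sub_div_sq (hP : IsProjOn {u | ∀ j, ⟪a j, u⟫ ≤ b j} P) (θ : E n)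
    {K : Set (E n)} (hK : K = activeCone a b (P θ) ∩ {u | ⟪u, θ - P θ⟫ = 0})
    {PK : E n → E n} (hPK : IsProjOn K PK) (z : E n) :
    Tendsto (fun σ : ℝ => 1 / σ ^ 2 * ‖P (θ + σ • z) - P θ‖ ^ 2) (𝓝[>] 0) (𝓝 (‖PK z‖ ^ 2)) := by
  refine tendsto_const_nhds.congr' ?_
  filter_upwards [eventually_proj_add_smul_eq hP θ hK hPK z, self_mem_nhdsWithin]
    with σ hσP (hσ : 0 < σ)
  rw [hσP, add_sub_cancel_left, norm_smul, Real.norm_of_nonneg hσ.le, mul_pow]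
  field_simp

end MetricProjection

theorem stmt10_general {n : ℕ} (C : Set (E n))
    (hpoly : ∃ (m : ℕ) (a : Fin m → E n) (b : Fin m → ℝ),
      C = {u : E n | ∀ j, ⟪a j, u⟫ ≤ b j})
    (P : E n → E n) (hP : IsProjOn C P) (θs : E n)
    {Ω : Type*} [MeasurableSpace Ω] (μ : Measure Ω)
    (Z : Ω → E n) (hZm : AEMeasurable Z μ) (hZ2 : Integrable (fun ω => ‖Z ω‖ ^ 2) μ)
    (K : Set (E n))
    (hKdef : K = tanCone C (P θs) ∩ {u : E n | ⟪u, θs - P θs⟫ = 0})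
    (PK : E n → E n) (hPK : IsProjOn K PK) :
    Tendsto
      (fun σ : ℝ => (1 / σ ^ 2) * ∫ ω, ‖P (θs + σ • Z ω) - P θs‖ ^ 2 ∂μ)
      (𝓝[>] 0) (𝓝 (∫ ω, ‖PK (Z ω)‖ ^ 2 ∂μ)) := by
  obtain ⟨m, a, b, rfl⟩ := hpoly
  rw [tanCone_polyhedron (hP θs).1] at hKdef
  have hconv := convex_polyhedron_s10 a b
  have hPc := hP.continuous hconv
  simp_rw [← integral_const_mul]
  refine tendsto_integral_filter_of_dominated_convergence (fun ω => ‖Z ω‖ ^ 2)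
    (.of_forall fun σ => ?_) (.of_forall fun σ => .of_forall fun ω => ?_) hZ2
    (.of_forall fun ω => tendsto_sq_norm_proj_sub_div_sq hP θs hKdef hPK (Z ω))
  · exact Continuous.comp_aestronglyMeasurable
      (g := fun x => 1 / σ ^ 2 * ‖P (θs + σ • x) - P θs‖ ^ 2) (by fun_prop) hZm.aestronglyMeasurable
  · rw [Real.norm_of_nonneg (by positivity)]
    exact hP.sq_norm_sub_div_sq_le hconv θs (Z ω) σ

theorem stmt10 {n : ℕ} (C : Set (E n)) (hne : C.Nonempty)
    (hpoly : ∃ (m : ℕ) (a : Fin m → E n) (b : Fin m → ℝ),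
      C = {u : E n | ∀ j, ⟪a j, u⟫ ≤ b j})
    (P : E n → E n) (hP : IsProjOn C P) (θs : E n)
    {Ω : Type*} [MeasurableSpace Ω] (μ : Measure Ω) [IsProbabilityMeasure μ]
    (Z : Ω → E n) (hZm : AEMeasurable Z μ) (hZ1 : Integrable Z μ)
    (hmean : ∫ ω, Z ω ∂μ = 0) (hZ2 : Integrable (fun ω => ‖Z ω‖ ^ 2) μ)
    (K : Set (E n))
    (hKdef : K = tanCone C (P θs) ∩ {u : E n | ⟪u, θs - P θs⟫ = 0})
    (PK : E n → E n) (hPK : IsProjOn K PK) :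
    Tendsto
      (fun σ : ℝ => (1 / σ ^ 2) * ∫ ω, ‖P (θs + σ • Z ω) - P θs‖ ^ 2 ∂μ)
      (𝓝[>] 0) (𝓝 (∫ ω, ‖PK (Z ω)‖ ^ 2 ∂μ)) :=
  stmt10_general C hpoly P hP θs μ Z hZm hZ2 K hKdef PK hPK
end
end

section
/- Let I_1,...,I_m partition {1,...,n} into consecutive blocks. The block monotone cone S_{|I_1|,...,|I_m|} = {u ∈ R^n : u nondecreasing, constant on each I_j} is isometric (via an orthogonal transformation of R^n followed by restriction to a coordinate subspace) to the cone {v ∈ R^m : v_1/√|I_1| ≤ v_2/√|I_2| ≤ ... ≤ v_m/√|I_m|} ⊆ R^m. -/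
open Set MeasureTheory Filter Metric
open scoped RealInnerProductSpace Topology

noncomputable section

/-! The normalized block indicators `g_j = 1_{I_j} / √|I_j|` are orthonormal, so they extend to an
orthonormal basis of `ℝⁿ` in which `g_j` sits at position `j`; take `Q` to be the coordinate map
of that basis. A block-constant `u = ∑ⱼ fⱼ 1_{I_j} = ∑ⱼ (√|I_j| fⱼ) g_j` has coordinates
`√|I_j| fⱼ` at the first `m` positions and `0` elsewhere, and `u` is nondecreasing iff `f` is. -/

open Function Module

theorem Function.Surjective.monotone_comp_iff {α β γ : Type*} [LinearOrder α] [PartialOrder β]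
    [Preorder γ] {b : α → β} (hb : Surjective b) (hmono : Monotone b) {f : β → γ} :
    Monotone (f ∘ b) ↔ Monotone f := by
  refine ⟨fun hf j j' hjj' => ?_, fun hf => hf.comp hmono⟩
  obtain ⟨⟨i, rfl⟩, ⟨i', rfl⟩⟩ := And.intro (hb j) (hb j')
  rcases le_total i i' with hii' | hi'i
  · exact hf hii'
  · rw [le_antisymm hjj' (hmono hi'i)]

theorem Orthonormal.exists_orthonormalBasis_extension_along {𝕜 E : Type*} [RCLike 𝕜]
    [NormedAddCommGroup E] [InnerProductSpace 𝕜 E] [FiniteDimensional 𝕜 E] {ι κ : Type*}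
    [Fintype κ] (card_κ : finrank 𝕜 E = Fintype.card κ) {v : ι → E} (hv : Orthonormal 𝕜 v)
    {e : ι → κ} (he : Injective e) :
    ∃ B : OrthonormalBasis κ 𝕜 E, ∀ i, B (e i) = v i := by
  have hv' : Orthonormal 𝕜 ((range e).domRestrict (extend e v 0)) := by
    convert hv.comp _ (Equiv.ofInjective e he).symm.injective using 1
    ext ⟨_, i, rfl⟩
    simp [he.extend_apply]
  obtain ⟨B, hB⟩ := hv'.exists_orthonormalBasis_extension_of_card_eq card_κ
  exact ⟨B, fun i => (hB _ (mem_range_self i)).trans (he.extend_apply v 0 i)⟩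

theorem EuclideanSpace.sum_smul_single_comp_eq_toLp_extend {𝕜 : Type*} [RCLike 𝕜]
    {ι κ : Type*} [Fintype ι] [DecidableEq κ] {e : ι → κ} (he : Injective e) (c : ι → 𝕜) :
    ∑ i, c i • EuclideanSpace.single (e i) (1 : 𝕜) = WithLp.toLp 2 (extend e c 0) := by
  classical
  ext k
  by_cases hk : ∃ i, e i = k
  · obtain ⟨i, rfl⟩ := hk
    simp [Pi.single_apply, he.eq_iff, he.extend_apply, eq_comm (a := i)]
  · simp [extend_apply' _ _ _ hk, fun i => Ne.symm (not_exists.1 hk i)]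

section FiberIndicator

variable {ι κ : Type*} [Fintype ι] [DecidableEq κ] (b : ι → κ)

def fiberCard (j : κ) : ℕ := (Finset.univ.filter fun i => b i = j).card

def normalizedFiberIndicator (j : κ) : EuclideanSpace ℝ ι :=
  WithLp.toLp 2 (Pi.single j (√(fiberCard b j))⁻¹ ∘ b)

variable {b}

theorem fiberCard_apply_pos (i : ι) : 0 < fiberCard b (b i) :=
  Finset.card_pos.2 ⟨i, by simp⟩

theorem fiberCard_pos (hb : Surjective b) (j : κ) : 0 < fiberCard b j := by
  obtain ⟨i, rfl⟩ := hb j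
  exact fiberCard_apply_pos i

theorem sum_comp_eq_sum_fiberCard_mul [Fintype κ] (F : κ → ℝ) :
    ∑ i, F (b i) = ∑ j, fiberCard b j * F j := by
  rw [← Finset.sum_fiberwise Finset.univ b]
  refine Finset.sum_congr rfl fun j _ => ?_
  rw [Finset.sum_congr rfl fun i hi => by rw [(Finset.mem_filter.1 hi).2], Finset.sum_const,
    nsmul_eq_mul, fiberCard]

theorem orthonormal_normalizedFiberIndicator [Fintype κ] (hb : Surjective b) :
    Orthonormal ℝ (normalizedFiberIndicator b) := by
  rw [orthonormal_iff_ite]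
  intro j j'
  have hc : (0 : ℝ) < fiberCard b j := mod_cast fiberCard_pos hb j
  simp only [normalizedFiberIndicator, PiLp.inner_apply, RCLike.inner_apply, conj_trivial,
    comp_apply]
  rw [sum_comp_eq_sum_fiberCard_mul fun k => (Pi.single j' (√(fiberCard b j'))⁻¹ : κ → ℝ) k *
    (Pi.single j (√(fiberCard b j))⁻¹ : κ → ℝ) k]
  rcases eq_or_ne j j' with rfl | hjj'
  · simp [Pi.single_apply, ← mul_inv, Real.mul_self_sqrt hc.le, hc.ne']
  · simp [Pi.single_apply, hjj']

theorem toLp_comp_eq_sum_smul_normalizedFiberIndicator [Fintype κ] (f : κ → ℝ) :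
    WithLp.toLp 2 (f ∘ b) = ∑ j, (√(fiberCard b j) * f j) • normalizedFiberIndicator b j := by
  ext i
  have hc : 0 < √(fiberCard b (b i)) := Real.sqrt_pos.2 (by exact_mod_cast fiberCard_apply_pos i)
  simp [normalizedFiberIndicator, Pi.single_apply]
  field_simp

end FiberIndicator

theorem setOf_monotone_constOnFibers_eq_image {ι κ : Type*} [LinearOrder ι] [PartialOrder κ]
    {b : ι → κ} (hmono : Monotone b) (hb : Surjective b) :
    {u : EuclideanSpace ℝ ι | (∀ i i', i ≤ i' → u i ≤ u i') ∧ ∀ i i', b i = b i' → u i = u i'} =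
      (fun f : κ → ℝ => WithLp.toLp 2 (f ∘ b)) '' {f | Monotone f} := by
  ext u
  constructor
  · rintro ⟨hu, hconst⟩
    obtain ⟨f, hf⟩ := (factorsThrough_iff u.ofLp).1 hconst
    refine ⟨f, ?_, by simp [← hf]⟩
    show Monotone f
    rw [← hb.monotone_comp_iff hmono, ← hf]
    exact fun i i' => hu i i'
  · rintro ⟨f, hf, rfl⟩
    exact ⟨fun i i' h => hf (hmono h), fun i i' h => congrArg f h⟩

theorem setOf_div_monotone_supported_eq_image {ι κ : Type*} [Preorder ι] {e : ι → κ}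
    (he : Injective e) {s : ι → ℝ} (hs : ∀ j, s j ≠ 0) :
    {v : EuclideanSpace ℝ κ | (∀ j j', j ≤ j' → v (e j) / s j ≤ v (e j') / s j') ∧
        ∀ i, (∀ j, e j ≠ i) → v i = 0} =
      (fun f : ι → ℝ => WithLp.toLp 2 (extend e (fun j => s j * f j) 0)) '' {f | Monotone f} := by
  ext v
  constructor
  · rintro ⟨hmono, hzero⟩
    refine ⟨fun j => v (e j) / s j, fun j j' h => hmono j j' h, ?_⟩
    ext i
    by_cases hi : ∃ j, e j = i
    · obtain ⟨j, rfl⟩ := hi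
      simp [he.extend_apply, mul_div_cancel₀ _ (hs j)]
    · simp [extend_apply' _ _ _ hi, hzero i (not_exists.1 hi)]
  · rintro ⟨f, hf, rfl⟩
    refine ⟨fun j j' h => ?_, fun i hi => ?_⟩
    · simpa [he.extend_apply, mul_div_cancel_left₀ _ (hs _)] using hf h
    · simp [extend_apply' _ _ _ (not_exists.2 hi)]

theorem stmt15 {n m : ℕ} (hmn : m ≤ n) (b : Fin n → Fin m) (hmono : Monotone b)
    (hsurj : Function.Surjective b)
    (S : Set (E n))
    (hS : S = {u : E n | (∀ i i' : Fin n, i ≤ i' → u i ≤ u i') ∧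
        ∀ i i' : Fin n, b i = b i' → u i = u i'})
    (w : Fin m → ℕ) (hw : ∀ j, w j = (Finset.univ.filter fun i => b i = j).card) :
    ∃ Q : E n ≃ₗᵢ[ℝ] E n,
      Q '' S = {v : E n |
        (∀ j j' : Fin m, j ≤ j' →
          v (Fin.castLE hmn j) / Real.sqrt (w j) ≤ v (Fin.castLE hmn j') / Real.sqrt (w j')) ∧
        ∀ i : Fin n, (∀ j : Fin m, Fin.castLE hmn j ≠ i) → v i = 0} := by
  obtain rfl : w = fiberCard b := funext hw
  have he := Fin.castLE_injective hmn
  obtain ⟨B, hB⟩ :=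
    (orthonormal_normalizedFiberIndicator hsurj).exists_orthonormalBasis_extension_along (by simp) he
  refine ⟨B.repr, ?_⟩
  have hsqrt (j : Fin m) : √(fiberCard b j : ℝ) ≠ 0 :=
    (Real.sqrt_pos.2 (mod_cast fiberCard_pos hsurj j)).ne'
  rw [hS, setOf_monotone_constOnFibers_eq_image hmono hsurj, ← image_comp,
    setOf_div_monotone_supported_eq_image he hsqrt]
  congr 1
  funext f
  simp only [comp_apply, toLp_comp_eq_sum_smul_normalizedFiberIndicator, ← hB, map_sum,
    map_smul, B.repr_self]
  exact EuclideanSpace.sum_smul_single_comp_eq_toLp_extend (𝕜 := ℝ) he _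
end
end

section
/- Let A be the n×n lower bidiagonal matrix with 1's on the diagonal and -1's on the subdiagonal. In the (unique) QR decomposition A = QR with Q orthogonal and R upper triangular with positive diagonal entries, the bottom-right entry of R equals 1/√n. -/
open Set MeasureTheory Filter Metric
open scoped RealInnerProductSpace Topology

noncomputable section

/-!
Write `m` for the last index. Since `R` is upper triangular, its last row is `R m m • eₘ`, and
`eₘ` is also the row vector of column sums `1ᵀ A` of the bidiagonal matrix `A`. From `Qᵀ A = R`
we get `(Q eₘ)ᵀ A = R m m • 1ᵀ A`, and as `det A = 1` this forces the last column of `Q` to be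
the constant vector `R m m`. That column is a unit vector, so `n (R m m)² = 1`.
-/

open Matrix

def lowerBidiag (α : Type*) [Ring α] (n : ℕ) : Matrix (Fin n) (Fin n) α :=
  of fun i j => if i = j then 1 else if (i : ℕ) = (j : ℕ) + 1 then -1 else 0

namespace lowerBidiag

variable {α : Type*} {n : ℕ}

theorem isLowerTriangular [Ring α] : (lowerBidiag α n).IsLowerTriangular := by
  intro i j (hij : i < j)
  simp [lowerBidiag, hij.ne, show (i : ℕ) ≠ j + 1 by omega]

theorem det [CommRing α] : (lowerBidiag α n).det = 1 := by
  rw [det_of_isLowerTriangular _ isLowerTriangular]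
  simp [lowerBidiag]

theorem one_vecMul [Ring α] (hn : 0 < n) :
    (fun _ => 1) ᵥ* lowerBidiag α n = Pi.single ⟨n - 1, Nat.sub_lt hn one_pos⟩ 1 := by
  ext j
  have hsplit : ∀ i : Fin n, lowerBidiag α n i j =
      (if i = j then 1 else 0) + if (i : ℕ) = (j : ℕ) + 1 then -1 else 0 := by
    intro i
    by_cases hij : i = j <;> simp [lowerBidiag, hij]
  have hsub : ∑ i : Fin n, (if (i : ℕ) = (j : ℕ) + 1 then (-1 : α) else 0)
      = if (j : ℕ) + 1 < n then -1 else 0 := by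
    simp only [Fin.sum_univ_eq_sum_range (fun k => if k = (j : ℕ) + 1 then (-1 : α) else 0),
      Finset.sum_ite_eq', Finset.mem_range]
  simp only [vecMul, dotProduct, one_mul, hsplit, Finset.sum_add_distrib, Finset.sum_ite_eq',
    Finset.mem_univ, if_true, hsub, Pi.single_apply]
  simp only [Fin.ext_iff]
  split_ifs <;> first | omega | simp

end lowerBidiag

theorem Matrix.IsUpperTriangular.row_eq_single_of_isTop {ι α : Type*} [LinearOrder ι] [Zero α]
    {R : Matrix ι ι α} (hR : R.IsUpperTriangular) {i : ι} (hi : IsTop i) :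
    R i = Pi.single i (R i i) := by
  ext j
  rcases eq_or_lt_of_le (hi j) with rfl | hj
  · simp
  · simp [hR hj, hj.ne]

theorem Matrix.sum_sq_col_eq_one_of_mem_orthogonalGroup {ι α : Type*} [Fintype ι] [DecidableEq ι]
    [CommRing α] {Q : Matrix ι ι α} (hQ : Q ∈ orthogonalGroup ι α) (j : ι) :
    ∑ i, Q i j ^ 2 = 1 := by
  simpa [mul_apply, sq] using congrFun₂ ((mem_orthogonalGroup_iff' _ _).1 hQ) j j

theorem eq_one_div_sqrt_of_mul_sq_eq_one {a x : ℝ} (hx : 0 < x) (h : a * x ^ 2 = 1) :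
    x = 1 / √a := by
  have ha : a = (x ^ 2)⁻¹ := eq_inv_of_mul_eq_one_left h
  rw [ha, Real.sqrt_inv, Real.sqrt_sq hx.le, one_div, inv_inv]

theorem stmt16 {n : ℕ} (hn : 0 < n)
    (A Q R : Matrix (Fin n) (Fin n) ℝ)
    (hA : A = Matrix.of fun i j : Fin n => if i = j then (1:ℝ) else if (i : ℕ) = (j : ℕ) + 1 then -1 else 0)
    (hQ : Q ∈ Matrix.orthogonalGroup (Fin n) ℝ)
    (hR : R.BlockTriangular id)  -- upper triangular: R i j = 0 for j < i
    (hRdiag : ∀ i, 0 < R i i)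
    (hQR : A = Q * R) :
    R ⟨n - 1, Nat.sub_lt hn one_pos⟩ ⟨n - 1, Nat.sub_lt hn one_pos⟩
      = 1 / Real.sqrt n := by
  set m : Fin n := ⟨n - 1, Nat.sub_lt hn one_pos⟩
  have hm : IsTop m := fun j => Fin.le_def.2 (Nat.le_sub_one_of_lt j.isLt)
  change A = lowerBidiag ℝ n at hA
  have hQtA : Qᵀ * A = R := by rw [hQR, ← mul_assoc, (mem_orthogonalGroup_iff' _ _).1 hQ, one_mul]
  have hcol : (fun i => Q i m) = fun _ => R m m := by
    refine vecMul_injective_of_isUnit (A := A) ?_ ?_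
    · simp [isUnit_iff_isUnit_det, hA, lowerBidiag.det]
    · calc (fun i => Q i m) ᵥ* A = R m := by rw [← hQtA]; rfl
        _ = Pi.single m (R m m) := IsUpperTriangular.row_eq_single_of_isTop hR hm
        _ = R m m • ((fun _ => 1) ᵥ* A) := by
          rw [hA, lowerBidiag.one_vecMul hn, ← Pi.single_smul', smul_eq_mul, mul_one]
        _ = (fun _ => R m m) ᵥ* A := by
          rw [← smul_vecMul, Pi.smul_def]
          simp only [smul_eq_mul, mul_one]
  have hnorm : (n : ℝ) * R m m ^ 2 = 1 := by
    simpa [congrFun hcol] using sum_sq_col_eq_one_of_mem_orthogonalGroup hQ m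
  exact eq_one_div_sqrt_of_mul_sq_eq_one (hRdiag m) hnorm
end
end

section
/- Let C be a nonempty closed convex set in R^n, θ0 ∈ C, F = C - θ0 = {θ - θ0 : θ ∈ C}, and K_C = ∩_{θ∈C} T_C(θ) the core cone. Then for every x ∈ R^n, ‖Π_F(x)‖ ≥ ‖Π_{K_C}(x)‖. -/
/-! Every `v ∈ K_C` is a recession direction of `C`, so the whole ray `ℝ≥0 • Π_K x` lies in
`F`. Optimality of `Π_F x` against that ray gives `⟪x - Π_F x, Π_K x⟫ ≤ 0`, optimality of
`Π_K x` against `0 ∈ K_C` gives `‖Π_K x‖² ≤ ⟪x, Π_K x⟫`, and Cauchy–Schwarz on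
`⟪x, Π_K x⟫ = ⟪x - Π_F x, Π_K x⟫ + ⟪Π_F x, Π_K x⟫` finishes. -/

open Set MeasureTheory Filter Metric
open scoped RealInnerProductSpace Topology

noncomputable section

namespace IsProjOn

variable {n : ℕ} {S : Set (E n)} {P : E n → E n}

theorem inner_sub_nonpos_s19 (hP : IsProjOn S P) (hS : Convex ℝ S) (x : E n) {y : E n}
    (hy : y ∈ S) : ⟪x - P x, y - P x⟫ ≤ 0 := by
  obtain ⟨hmem, hmin⟩ := hP x
  have : Nonempty S := ⟨⟨P x, hmem⟩⟩
  refine (norm_eq_iInf_iff_real_inner_le_zero hS hmem).mp ?_ y hy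
  exact le_antisymm (le_ciInf fun w => hmin w w.2)
    (ciInf_le ⟨0, by rintro _ ⟨w, rfl⟩; exact norm_nonneg _⟩ (⟨P x, hmem⟩ : S))

theorem norm_sq_le_inner (hP : IsProjOn S P) (hS : Convex ℝ S) (h0 : (0 : E n) ∈ S)
    (x : E n) : ‖P x‖ ^ 2 ≤ ⟪x, P x⟫ := by
  have h := hP.inner_sub_nonpos_s19 hS x h0
  rw [zero_sub, inner_neg_right, inner_sub_left, real_inner_self_eq_norm_sq] at h
  linarith

theorem inner_nonpos_of_forall_smul_mem (hP : IsProjOn S P) (hS : Convex ℝ S) (x : E n)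
    {v : E n} (hv : ∀ c : ℝ, 0 ≤ c → c • v ∈ S) : ⟪x - P x, v⟫ ≤ 0 := by
  by_contra! hpos
  set a := ⟪x - P x, v⟫
  set b := ⟪x - P x, P x⟫
  have hc : 0 ≤ (|b| + 1) / a := by positivity
  have h := hP.inner_sub_nonpos_s19 hS x (hv _ hc)
  rw [inner_sub_right, real_inner_smul_right, div_mul_cancel₀ _ hpos.ne'] at h
  linarith [le_abs_self b]

end IsProjOn

section TangentCone

variable {n : ℕ} {C : Set (E n)}

theorem convex_tanCone (hC : Convex ℝ C) (θ0 : E n) : Convex ℝ (tanCone C θ0) := by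
  refine Convex.closure ?_
  rintro _ ⟨α, hα, θ1, hθ1, rfl⟩ _ ⟨β, hβ, θ2, hθ2, rfl⟩ a b ha hb hab
  rcases (by positivity : 0 ≤ a * α + b * β).eq_or_lt with hγ | hγ
  · refine ⟨0, le_rfl, θ1, hθ1, ?_⟩
    rw [smul_smul, smul_smul, (by nlinarith : a * α = 0), (by nlinarith : b * β = 0)]
    simp
  · refine ⟨a * α + b * β, hγ.le, _,
      convex_iff_div.1 hC hθ1 hθ2 (by positivity) (by positivity) hγ, ?_⟩
    match_scalars
    · field_simp
    · ring
    · field_simp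

theorem zero_mem_tanCone {θ : E n} (hθ : θ ∈ C) : (0 : E n) ∈ tanCone C θ :=
  subset_closure ⟨0, le_rfl, θ, hθ, (zero_smul ℝ _).symm⟩

theorem inner_nonpos_of_mem_tanCone {p a : E n} (ha : ∀ w ∈ C, ⟪a, w - p⟫ ≤ 0) {u : E n}
    (hu : u ∈ tanCone C p) : ⟪a, u⟫ ≤ 0 := by
  have hclosed : IsClosed {z : E n | ⟪a, z⟫ ≤ 0} :=
    isClosed_le (continuous_const.inner continuous_id) continuous_const
  refine closure_minimal ?_ hclosed hu
  rintro _ ⟨α, hα, w, hw, rfl⟩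
  rw [mem_ofPred_eq, real_inner_smul_right]
  exact mul_nonpos_of_nonneg_of_nonpos hα (ha w hw)

/-- With `p` the nearest point of `C` to `θ + v`, both `v` and `θ - p` pair nonpositively
with `θ + v - p`, and they add up to `θ + v - p`. -/
theorem add_mem_of_forall_mem_tanCone (hcl : IsClosed C) (hC : Convex ℝ C) {v : E n}
    (hv : ∀ p ∈ C, v ∈ tanCone C p) {θ : E n} (hθ : θ ∈ C) : θ + v ∈ C := by
  obtain ⟨p, hp, hmin⟩ :=
    exists_norm_eq_iInf_of_complete_convex ⟨θ, hθ⟩ hcl.isComplete hC (θ + v)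
  have hnormal := (norm_eq_iInf_iff_real_inner_le_zero hC hp).mp hmin
  have hsq : ⟪θ + v - p, θ + v - p⟫ ≤ 0 := by
    have hsplit : θ + v - p = v + (θ - p) := by abel
    nth_rw 2 [hsplit]
    rw [inner_add_right]
    linarith [inner_nonpos_of_mem_tanCone hnormal (hv p hp), hnormal θ hθ]
  rwa [sub_eq_zero.mp (real_inner_self_nonpos.mp hsq)]

theorem add_smul_mem_of_forall_mem_tanCone (hcl : IsClosed C) (hC : Convex ℝ C) {v : E n}
    (hv : ∀ p ∈ C, v ∈ tanCone C p) {θ : E n} (hθ : θ ∈ C) {c : ℝ} (hc : 0 ≤ c) :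
    θ + c • v ∈ C := by
  have hnat : ∀ m : ℕ, θ + (m : ℝ) • v ∈ C := by
    intro m
    induction m with
    | zero => simpa using hθ
    | succ k ih =>
      simpa [add_smul, add_assoc] using add_mem_of_forall_mem_tanCone hcl hC hv ih
  obtain ⟨m, hm⟩ := exists_nat_gt c
  have hm0 : (0 : ℝ) < m := hc.trans_lt hm
  have h := hC.add_smul_mem hθ (hnat m) ⟨div_nonneg hc hm0.le, (div_le_one hm0).2 hm.le⟩
  rwa [smul_smul, div_mul_cancel₀ _ hm0.ne'] at h

end TangentCone

theorem stmt19_general {n : ℕ} (C : Set (E n)) (hcl : IsClosed C)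
    (hconv : Convex ℝ C) (θ0 : E n) (hθ0 : θ0 ∈ C)
    (F : Set (E n)) (hF : F = (fun θ => θ - θ0) '' C)
    (K : Set (E n)) (hK : K = ⋂ θ ∈ C, tanCone C θ)
    (PF PK : E n → E n) (hPF : IsProjOn F PF) (hPK : IsProjOn K PK)
    (x : E n) :
    ‖PK x‖ ≤ ‖PF x‖ := by
  subst hF hK
  set p := PF x
  set q := PK x
  have hFconv : Convex ℝ ((fun θ => θ - θ0) '' C) := by
    simpa only [sub_eq_neg_add] using hconv.translate (-θ0)
  have hKconv : Convex ℝ (⋂ θ ∈ C, tanCone C θ) :=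
    convex_iInter₂ fun θ _ => convex_tanCone hconv θ
  have hq : ∀ θ ∈ C, q ∈ tanCone C θ := mem_iInter₂.mp (hPK x).1
  have hqF : ∀ c : ℝ, 0 ≤ c → c • q ∈ (fun θ => θ - θ0) '' C := fun c hc =>
    ⟨θ0 + c • q, add_smul_mem_of_forall_mem_tanCone hcl hconv hq hθ0 hc, add_sub_cancel_left _ _⟩
  have hxpq : ⟪x - p, q⟫ ≤ 0 := hPF.inner_nonpos_of_forall_smul_mem hFconv x hqF
  have hqq : ‖q‖ ^ 2 ≤ ‖p‖ * ‖q‖ :=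
    calc ‖q‖ ^ 2 ≤ ⟪x, q⟫ :=
          hPK.norm_sq_le_inner hKconv (mem_iInter₂.mpr fun θ hθ => zero_mem_tanCone hθ) x
      _ = ⟪x - p, q⟫ + ⟪p, q⟫ := by rw [← inner_add_left, sub_add_cancel]
      _ ≤ ‖p‖ * ‖q‖ := by linarith [real_inner_le_norm p q]
  nlinarith [norm_nonneg p, norm_nonneg q]

theorem stmt19 {n : ℕ} (C : Set (E n)) (hne : C.Nonempty) (hcl : IsClosed C)
    (hconv : Convex ℝ C) (θ0 : E n) (hθ0 : θ0 ∈ C)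
    (F : Set (E n)) (hF : F = (fun θ => θ - θ0) '' C)
    (K : Set (E n)) (hK : K = ⋂ θ ∈ C, tanCone C θ)
    (PF PK : E n → E n) (hPF : IsProjOn F PF) (hPK : IsProjOn K PK)
    (x : E n) :
    ‖PK x‖ ≤ ‖PF x‖ :=
  stmt19_general C hcl hconv θ0 hθ0 F hF K hK PF PK hPF hPK x
end
end
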